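/- Let d ≥ 2, let k > 2 be an integer, and let ε ∈ [0,1). Let N_ε(ρ) = (1−ε)ρ + ε·tr(ρ)·I_d/d be the d-dimensional depolarizing channel, and let H_j = (S_j + S_j†)/2 be the moment observable on ℂ^{d^j}. Suppose that for each l with 2 ≤ l ≤ k−1 we are given: (i) a completely positive map C_l on d^l×d^l matrices and a real number t_l such that (1−ε)^{−l}·tr[H_l · C_l(N_ε(ρ)^{⊗l})] − t_l = tr[ρ^l] for every density matrix ρ on ℂ^d; and (ii) a completely positive map R_l on d^k×d^k matrices such that R_l(H_k) = −H_l ⊗ I_{d^{k−l}}/d^{k−l}. Define f_j = (1−ε)^{−j}, define the map C_k = id + Σ_{l=2}^{k−1} binom(k,l)·(1−ε)^l·ε^{k−l}·f_l · (R_l† ∘ (C_l ⊗ id)), where R_l† is the trace-pairing adjoint of R_l and C_l ⊗ id acts as C_l on the first l factors and the identity on the remaining k−l factors, and define t_k = f_k·[ ε^k/d^{k−1} + k(1−ε)ε^{k−1}/d^{k−1} − Σ_{l=2}^{k−1} binom(k,l)·(1−ε)^l·ε^{k−l}·d^{l−k}·t_l ]. Then for every density matrix ρ on ℂ^d, f_k·tr[H_k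 · C_k(N_ε(ρ)^{⊗k})] − t_k = tr[ρ^k]. (Inductive step of the recursive construction of the k-th moment retriever for depolarizing noise.) -/

import Mathlib

open Matrix BigOperators ComplexOrder

/-- The cyclic permutation operator `S_j` on `(ℂ^d)^{⊗j} ≅ ℂ^{d^j}`. -/
noncomputable def cyclicPermOp (d j : ℕ) : Matrix (Fin j → Fin d) (Fin j → Fin d) ℂ :=
  Matrix.of fun a b => if ∀ i, a i = b (finRotate j i) then 1 else 0

/-- The moment observable `H_j = (S_j + S_j†)/2`. -/
noncomputable def momentObs (d j : ℕ) : Matrix (Fin j → Fin d) (Fin j → Fin d) ℂ :=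
  (1 / 2 : ℂ) • (cyclicPermOp d j + (cyclicPermOp d j)ᴴ)

/-- The `j`-fold Kronecker power `ρ^{⊗j}`. -/
noncomputable def kronPow {d : ℕ} (ρ : Matrix (Fin d) (Fin d) ℂ) (j : ℕ) :
    Matrix (Fin j → Fin d) (Fin j → Fin d) ℂ :=
  Matrix.of fun a b => ∏ i, ρ (a i) (b i)

/-- The `d`-dimensional depolarizing channel `N_ε(ρ) = (1−ε)ρ + ε·tr(ρ)·I_d/d`. -/
noncomputable def NdepD (d : ℕ) (ε : ℝ) (ρ : Matrix (Fin d) (Fin d) ℂ) :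
    Matrix (Fin d) (Fin d) ℂ :=
  ((1 - ε : ℝ) : ℂ) • ρ + ((ε / d : ℝ) : ℂ) • ρ.trace • (1 : Matrix (Fin d) (Fin d) ℂ)

/-- A linear map on `n × n` complex matrices is completely positive if it admits a finite Kraus
representation `T(X) = Σᵢ AᵢXAᵢ†`. -/
def IsCP {n : Type*} [Fintype n] (T : Matrix n n ℂ →ₗ[ℂ] Matrix n n ℂ) : Prop :=
  ∃ (r : ℕ) (A : Fin r → Matrix n n ℂ), ∀ X, T X = ∑ i, A i * X * (A i)ᴴ

/-- First `l` tensor factors of an index of `(ℂ^d)^{⊗k}`. -/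
def splitL {d k l : ℕ} (h : l ≤ k) (a : Fin k → Fin d) : Fin l → Fin d :=
  fun i => a (Fin.castLE h i)

/-- Last `k − l` tensor factors of an index of `(ℂ^d)^{⊗k}`. -/
def splitR {d k l : ℕ} (h : l ≤ k) (a : Fin k → Fin d) : Fin (k - l) → Fin d :=
  fun i => a (Fin.cast (Nat.add_sub_cancel' h) (Fin.natAdd l i))

/-- The Kronecker product `A ⊗ B` of a `d^l × d^l` matrix with a `d^{k−l} × d^{k−l}` matrix,
viewed as a `d^k × d^k` matrix. -/
noncomputable def kronJoin {d k l : ℕ} (h : l ≤ k)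
    (A : Matrix (Fin l → Fin d) (Fin l → Fin d) ℂ)
    (B : Matrix (Fin (k - l) → Fin d) (Fin (k - l) → Fin d) ℂ) :
    Matrix (Fin k → Fin d) (Fin k → Fin d) ℂ :=
  Matrix.of fun a b => A (splitL h a) (splitL h b) * B (splitR h a) (splitR h b)

/-!
Pairing with `H_k`, the identity part of `C_k` sees `tr[H_k N^{⊗k}] = tr N^k` with
`N = N_ε(ρ)`, and the binomial theorem expands
`tr N^k = Σ_j binom(k,j) (1-ε)^j (ε/d)^(k-j) tr ρ^j`. Moving `R_l†` across the trace turns the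
`l`-th correction into
`tr[R_l(H_k) · (C_l(N^{⊗l}) ⊗ N^{⊗(k-l)})] = -d^(l-k) tr[H_l C_l(N^{⊗l})]`,
which the `l`-th retriever evaluates to `-d^(l-k) (1-ε)^l (tr ρ^l + t_l)`. With its coefficient
this cancels the `j = l` binomial term except for the `t_l` part, which is absorbed in `t_k`
together with the terms `j = 0, 1`; the term `j = k` leaves `(1-ε)^k tr ρ^k`.
-/

theorem Finset.sum_range_succ_eq_add_add_add_sum_Icc {M : Type*} [AddCommMonoid M] (f : ℕ → M)
    {k : ℕ} (hk : 2 ≤ k) :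
    ∑ j ∈ Finset.range (k + 1), f j
      = f 0 + f 1 + f k + ∑ j ∈ Finset.Icc 2 (k - 1), f j := by
  rw [Finset.sum_range_succ, Finset.range_eq_Ico, Finset.sum_eq_sum_Ico_succ_bot (by omega),
    Finset.sum_eq_sum_Ico_succ_bot (by omega),
    Finset.Icc_sub_one_right_eq_Ico_of_not_isMin (by simp; omega)]
  abel

namespace Matrix

variable {n R : Type*} [Fintype n] [DecidableEq n] [CommSemiring R]

theorem pow_succ_apply_eq_sum_prod (X : Matrix n n R) (j : ℕ) (x y : n) :
    (X ^ (j + 1)) x y = ∑ c : Fin j → n,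
      ∏ i : Fin (j + 1), X (@Fin.cons _ (fun _ => n) x c i) (@Fin.snoc _ (fun _ => n) c y i) := by
  induction j generalizing x with
  | zero => simp [Fin.snoc]
  | succ j ih =>
    rw [pow_succ', mul_apply, ← (Fin.consEquiv fun _ => n).sum_comp, Fintype.sum_prod_type]
    refine Finset.sum_congr rfl fun z _ => ?_
    rw [ih, Finset.mul_sum]
    refine Finset.sum_congr rfl fun c _ => ?_
    rw [show (Fin.consEquiv fun _ => n) (z, c) = Fin.cons z c from rfl,
      Fin.prod_univ_succ (n := j + 1), ← Fin.cons_snoc_eq_snoc_cons]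
    simp only [Fin.cons_zero, Fin.cons_succ]

theorem trace_pow_succ_eq_sum_prod_finRotate (X : Matrix n n R) (j : ℕ) :
    (X ^ (j + 1)).trace = ∑ a : Fin (j + 1) → n, ∏ i, X (a i) (a (finRotate (j + 1) i)) := by
  rw [← (Fin.consEquiv fun _ => n).sum_comp, Fintype.sum_prod_type, trace]
  refine Finset.sum_congr rfl fun x _ => ?_
  simp only [diag_apply, pow_succ_apply_eq_sum_prod, Fin.snoc_eq_cons_rotate]
  rfl

theorem trace_smul_add_smul_one_pow (a b : R) (X : Matrix n n R) (k : ℕ) :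
    ((a • X + b • 1) ^ k).trace =
      ∑ j ∈ Finset.range (k + 1), a ^ j * b ^ (k - j) * k.choose j * (X ^ j).trace := by
  rw [((Commute.one_right X).smul_left a |>.smul_right b).add_pow, trace_sum]
  refine Finset.sum_congr rfl fun j _ => ?_
  rw [smul_pow, smul_pow, one_pow, smul_mul_smul, mul_one, ← nsmul_eq_mul', trace_smul,
    trace_smul, nsmul_eq_mul, smul_eq_mul]
  ring

theorem trace_mul_id_add_sum_smul_apply {ι : Type*} (H X : Matrix n n R) (s : Finset ι)
    (c : ι → R) (Φ : ι → Matrix n n R →ₗ[R] Matrix n n R) :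
    (H * ((LinearMap.id + ∑ i ∈ s, c i • Φ i : Matrix n n R →ₗ[R] Matrix n n R) X)).trace
      = (H * X).trace + ∑ i ∈ s, c i * (H * Φ i X).trace := by
  simp only [LinearMap.add_apply, LinearMap.id_apply, LinearMap.sum_apply, LinearMap.smul_apply,
    mul_add, trace_add, Finset.mul_sum, trace_sum, Matrix.mul_smul, trace_smul, smul_eq_mul]

end Matrix

section MomentObservable

variable {d : ℕ}

theorem trace_cyclicPermOp_mul_kronPow (X : Matrix (Fin d) (Fin d) ℂ) (j : ℕ) :
    (cyclicPermOp d (j + 1) * kronPow X (j + 1)).trace = (X ^ (j + 1)).trace := by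
  rw [trace_pow_succ_eq_sum_prod_finRotate, trace]
  simp only [diag_apply, mul_apply]
  rw [Finset.sum_comm]
  simp [cyclicPermOp, kronPow, ← funext_iff]

theorem trace_conjTranspose_cyclicPermOp_mul_kronPow (X : Matrix (Fin d) (Fin d) ℂ) (j : ℕ) :
    ((cyclicPermOp d (j + 1))ᴴ * kronPow X (j + 1)).trace = (X ^ (j + 1)).trace := by
  rw [← trace_transpose (X ^ _), transpose_pow, trace_pow_succ_eq_sum_prod_finRotate, trace]
  simp [mul_apply, cyclicPermOp, kronPow, apply_ite star, ← funext_iff]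

theorem trace_momentObs_mul_kronPow (X : Matrix (Fin d) (Fin d) ℂ) {j : ℕ} (hj : j ≠ 0) :
    (momentObs d j * kronPow X j).trace = (X ^ j).trace := by
  obtain ⟨j, rfl⟩ := Nat.exists_eq_succ_of_ne_zero hj
  rw [momentObs, smul_mul, add_mul, trace_smul, trace_add, trace_cyclicPermOp_mul_kronPow,
    trace_conjTranspose_cyclicPermOp_mul_kronPow, smul_eq_mul]
  ring

end MomentObservable

section KroneckerSplit

variable {d k l : ℕ}

def finSumFinSubEquiv (h : l ≤ k) : Fin l ⊕ Fin (k - l) ≃ Fin k :=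
  finSumFinEquiv.trans (finCongr (Nat.add_sub_cancel' h))

def splitEquiv (h : l ≤ k) : (Fin k → Fin d) ≃ (Fin l → Fin d) × (Fin (k - l) → Fin d) :=
  ((finSumFinSubEquiv h).symm.arrowCongr (Equiv.refl _)).trans
    (Equiv.sumArrowEquivProdArrow _ _ _)

@[simp]
theorem splitEquiv_apply (h : l ≤ k) (a : Fin k → Fin d) :
    splitEquiv h a = (splitL h a, splitR h a) :=
  rfl

theorem kronPow_eq_kronJoin (h : l ≤ k) (X : Matrix (Fin d) (Fin d) ℂ) :
    kronPow X k = kronJoin h (kronPow X l) (kronPow X (k - l)) := by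
  ext a b
  exact ((finSumFinSubEquiv h).prod_comp _).symm.trans (Fintype.prod_sum_type _)

theorem kronJoin_mul_kronJoin (h : l ≤ k) (A A' : Matrix (Fin l → Fin d) (Fin l → Fin d) ℂ)
    (B B' : Matrix (Fin (k - l) → Fin d) (Fin (k - l) → Fin d) ℂ) :
    kronJoin h A B * kronJoin h A' B' = kronJoin h (A * A') (B * B') := by
  ext a b
  simp only [kronJoin, mul_apply, of_apply]
  rw [Finset.sum_mul_sum, ← Fintype.sum_prod_type', ← (splitEquiv h).sum_comp]
  exact Fintype.sum_congr _ _ fun c => by rw [splitEquiv_apply]; ring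

theorem trace_kronJoin (h : l ≤ k) (A : Matrix (Fin l → Fin d) (Fin l → Fin d) ℂ)
    (B : Matrix (Fin (k - l) → Fin d) (Fin (k - l) → Fin d) ℂ) :
    (kronJoin h A B).trace = A.trace * B.trace := by
  rw [trace, trace, trace, Finset.sum_mul_sum, ← Fintype.sum_prod_type',
    ← (splitEquiv h).sum_comp]
  rfl

theorem trace_kronPow (X : Matrix (Fin d) (Fin d) ℂ) (j : ℕ) :
    (kronPow X j).trace = X.trace ^ j := by
  simp only [trace, diag_apply, kronPow, of_apply]
  exact (Fintype.sum_pow (fun i => X i i) j).symm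

end KroneckerSplit

section Depolarizing

variable {d : ℕ}

theorem NdepD_eq_of_trace_eq_one (ε : ℝ) {ρ : Matrix (Fin d) (Fin d) ℂ} (hρ : ρ.trace = 1) :
    NdepD d ε ρ = (1 - (ε : ℂ)) • ρ + ((ε : ℂ) / d) • 1 := by
  rw [NdepD, hρ, one_smul]
  push_cast
  rfl

theorem trace_NdepD (hd : d ≠ 0) (ε : ℝ) (ρ : Matrix (Fin d) (Fin d) ℂ) :
    (NdepD d ε ρ).trace = ρ.trace := by
  have hd' : (d : ℂ) ≠ 0 := Nat.cast_ne_zero.2 hd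
  simp only [NdepD, trace_add, trace_smul, trace_one, Fintype.card_fin, smul_eq_mul]
  push_cast
  field_simp
  ring

end Depolarizing

theorem trace_mul_adjoint_apply_kronJoin {d k l : ℕ} (h : l ≤ k)
    {H : Matrix (Fin k → Fin d) (Fin k → Fin d) ℂ} {G : Matrix (Fin l → Fin d) (Fin l → Fin d) ℂ}
    {c : ℂ}
    (C : Matrix (Fin l → Fin d) (Fin l → Fin d) ℂ → Matrix (Fin l → Fin d) (Fin l → Fin d) ℂ)
    (R Radj ClId :
      Matrix (Fin k → Fin d) (Fin k → Fin d) ℂ → Matrix (Fin k → Fin d) (Fin k → Fin d) ℂ)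
    (hR : R H = -kronJoin h G (c • 1))
    (hRadj : ∀ A B, (R A * B).trace = (A * Radj B).trace)
    (hClId : ∀ A B, ClId (kronJoin h A B) = kronJoin h (C A) B)
    (A : Matrix (Fin l → Fin d) (Fin l → Fin d) ℂ)
    (B : Matrix (Fin (k - l) → Fin d) (Fin (k - l) → Fin d) ℂ) :
    (H * Radj (ClId (kronJoin h A B))).trace = -(c * B.trace * (G * C A).trace) := by
  rw [hClId, ← hRadj, hR, neg_mul, trace_neg, kronJoin_mul_kronJoin, smul_mul, one_mul,
    trace_kronJoin, trace_smul, smul_eq_mul]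
  ring

-- `m j` stands for `tr ρ^j` and `s l` for `t_l`.
theorem binomial_moment_correction {k : ℕ} (hk : 2 ≤ k) {u e D : ℂ} (hu : u ≠ 0)
    (hD : D ≠ 0) (m s : ℕ → ℂ) (hm0 : m 0 = D) (hm1 : m 1 = 1) :
    (u ^ k)⁻¹ * (∑ j ∈ Finset.range (k + 1), u ^ j * (e / D) ^ (k - j) * k.choose j * m j
        + ∑ l ∈ Finset.Icc 2 (k - 1), k.choose l * u ^ l * e ^ (k - l) * (u ^ l)⁻¹ *
            -((D ^ (k - l))⁻¹ * (u ^ l * (m l + s l))))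
      - (u ^ k)⁻¹ * (e ^ k / D ^ (k - 1) + k * u * e ^ (k - 1) / D ^ (k - 1)
        - ∑ l ∈ Finset.Icc 2 (k - 1), k.choose l * u ^ l * e ^ (k - l) * (D ^ (k - l))⁻¹ * s l)
      = m k := by
  have hmiddle : ∑ l ∈ Finset.Icc 2 (k - 1), u ^ l * (e / D) ^ (k - l) * k.choose l * m l
      + ∑ l ∈ Finset.Icc 2 (k - 1), k.choose l * u ^ l * e ^ (k - l) * (u ^ l)⁻¹ *
          -((D ^ (k - l))⁻¹ * (u ^ l * (m l + s l)))
      = -∑ l ∈ Finset.Icc 2 (k - 1),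
          k.choose l * u ^ l * e ^ (k - l) * (D ^ (k - l))⁻¹ * s l := by
    rw [← Finset.sum_add_distrib, ← Finset.sum_neg_distrib]
    refine Finset.sum_congr rfl fun l _ => ?_
    rw [div_pow]
    field_simp
    ring
  obtain ⟨K, rfl⟩ : ∃ K, k = K + 1 := ⟨k - 1, by omega⟩
  rw [Finset.sum_range_succ_eq_add_add_add_sum_Icc _ hk, hm0, hm1]
  simp only [Nat.add_sub_cancel, Nat.sub_zero, Nat.sub_self, Nat.choose_zero_right,
    Nat.choose_one_right, Nat.choose_self, Nat.cast_one, pow_zero] at hmiddle ⊢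
  linear_combination (norm := ring_nf) (u ^ (K + 1))⁻¹ * hmiddle
  simp only [inv_pow]
  field_simp
  ring

/-- inductive step of the recursive construction of the `k`-th moment retriever
for depolarizing noise.  Given, for each `2 ≤ l ≤ k−1`, a CP map `C l` and a real `t l`
retrieving the `l`-th moment with overhead `(1−ε)^{−l}`, and a CP map `R l` with
`R l (H_k) = −H_l ⊗ I/d^{k−l}` (with `Radj l` the trace-pairing adjoint of `R l` and `ClId l`
the map `C l ⊗ id`), the map
`C_k = id + Σ_l binom(k,l)(1−ε)^l ε^{k−l} f_l (R_l† ∘ (C_l ⊗ id))` together with the stated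
`t_k` retrieves the `k`-th moment: `f_k·tr[H_k · C_k(N_ε(ρ)^{⊗k})] − t_k = tr[ρ^k]`. -/
theorem kth_moment_retriever_inductive_step (d k : ℕ) (hd : 2 ≤ d) (hk : 2 < k)
    (ε : ℝ) (hε1 : ε < 1)
    (C : ∀ l : ℕ, Matrix (Fin l → Fin d) (Fin l → Fin d) ℂ →ₗ[ℂ]
      Matrix (Fin l → Fin d) (Fin l → Fin d) ℂ)
    (t : ℕ → ℝ)
    (R Radj ClId : ℕ → (Matrix (Fin k → Fin d) (Fin k → Fin d) ℂ →ₗ[ℂ]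
      Matrix (Fin k → Fin d) (Fin k → Fin d) ℂ))
    (hret : ∀ l, 2 ≤ l → l ≤ k - 1 →
      ∀ ρ : Matrix (Fin d) (Fin d) ℂ, ρ.PosSemidef → ρ.trace = 1 →
        ((((1 - ε) ^ l)⁻¹ : ℝ) : ℂ) * (momentObs d l * C l (kronPow (NdepD d ε ρ) l)).trace
            - ((t l : ℝ) : ℂ)
          = (ρ ^ l).trace)
    (hR : ∀ l (hl : 2 ≤ l) (hl' : l ≤ k - 1),
      R l (momentObs d k)
        = -(kronJoin (show l ≤ k by omega) (momentObs d l)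
            ((((d : ℂ) ^ (k - l))⁻¹) • (1 : Matrix (Fin (k - l) → Fin d) (Fin (k - l) → Fin d) ℂ))))
    (hRadj : ∀ l, 2 ≤ l → l ≤ k - 1 → ∀ A B, (R l A * B).trace = (A * Radj l B).trace)
    (hClId : ∀ l (hl : 2 ≤ l) (hl' : l ≤ k - 1)
      (A : Matrix (Fin l → Fin d) (Fin l → Fin d) ℂ)
      (B : Matrix (Fin (k - l) → Fin d) (Fin (k - l) → Fin d) ℂ),
      ClId l (kronJoin (show l ≤ k by omega) A B) = kronJoin (show l ≤ k by omega) (C l A) B)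
    (ρ : Matrix (Fin d) (Fin d) ℂ) (hρ : ρ.PosSemidef) (hρ1 : ρ.trace = 1) :
    ((((1 - ε) ^ k)⁻¹ : ℝ) : ℂ) *
        (momentObs d k *
          (((LinearMap.id + ∑ l ∈ Finset.Icc 2 (k - 1),
              (((k.choose l : ℝ) * (1 - ε) ^ l * ε ^ (k - l) * ((1 - ε) ^ l)⁻¹ : ℝ) : ℂ) •
                (Radj l ∘ₗ ClId l)) :
              Matrix (Fin k → Fin d) (Fin k → Fin d) ℂ →ₗ[ℂ]
                Matrix (Fin k → Fin d) (Fin k → Fin d) ℂ)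
            (kronPow (NdepD d ε ρ) k))).trace
      - ((((1 - ε) ^ k)⁻¹ *
          (ε ^ k / (d : ℝ) ^ (k - 1) + (k : ℝ) * (1 - ε) * ε ^ (k - 1) / (d : ℝ) ^ (k - 1)
            - ∑ l ∈ Finset.Icc 2 (k - 1),
                (k.choose l : ℝ) * (1 - ε) ^ l * ε ^ (k - l) * ((d : ℝ) ^ (k - l))⁻¹ * t l) : ℝ) : ℂ)
      = (ρ ^ k).trace := by
  have hd0 : d ≠ 0 := by omega
  have hu : (1 - ε : ℂ) ≠ 0 := by exact_mod_cast (sub_pos.2 hε1).ne'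
  have hN : (NdepD d ε ρ).trace = 1 := (trace_NdepD hd0 ε ρ).trans hρ1
  have hcorrection : ∀ l ∈ Finset.Icc 2 (k - 1),
      (momentObs d k * Radj l (ClId l (kronPow (NdepD d ε ρ) k))).trace =
        -(((d : ℂ) ^ (k - l))⁻¹ * ((1 - ε : ℂ) ^ l * ((ρ ^ l).trace + t l))) := by
    intro l hl
    obtain ⟨hl2, hl1⟩ := Finset.mem_Icc.1 hl
    have hretl : (momentObs d l * C l (kronPow (NdepD d ε ρ) l)).trace =
        (1 - ε : ℂ) ^ l * ((ρ ^ l).trace + t l) := by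
      rw [← hret l hl2 hl1 ρ hρ hρ1]
      push_cast
      field_simp
      ring
    rw [kronPow_eq_kronJoin (by omega : l ≤ k),
      trace_mul_adjoint_apply_kronJoin _ (C l) (R l) (Radj l) (ClId l) (hR l hl2 hl1)
        (hRadj l hl2 hl1) (hClId l hl2 hl1), trace_kronPow, hN, one_pow, mul_one, hretl]
  rw [trace_mul_id_add_sum_smul_apply,
    Finset.sum_congr rfl fun l hl => by rw [LinearMap.comp_apply, hcorrection l hl],
    trace_momentObs_mul_kronPow _ (by omega), NdepD_eq_of_trace_eq_one ε hρ1,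
    trace_smul_add_smul_one_pow]
  push_cast
  exact binomial_moment_correction hk.le hu (Nat.cast_ne_zero.2 hd0) (fun j => (ρ ^ j).trace)
    (fun l => t l) (by simp) (by simpa using hρ1)
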